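/- arXiv:2503.18410 — 3 statements merged into one kernel-verified Lean document; each statement's English description precedes it below -/
import Mathlib

section
/- For every q > N there exists C_q > 0, independent of ε, such that for all sufficiently small ε > 0 and all y ∈ ℝ^N one has |Φ_ε(y) − Φ_ε(0)| ≤ C_q·ε^{N/q}·|y|^{2−N/q}. -/
noncomputable section

open Real MeasureTheory Filter Set

abbrev Euc (N : ℕ) := EuclideanSpace ℝ (Fin N)

/-- The coordinate vector with a `1` in coordinate `n` (and `0` elsewhere). -/
noncomputable def evec {N : ℕ} (n : ℕ) : Euc N := WithLp.toLp 2 (fun i => if (i : ℕ) = n then (1:ℝ) else 0)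

/-- The Laplacian, expressed through the second iterated Fréchet derivative. -/
noncomputable def lap {N : ℕ} (f : Euc N → ℝ) (y : Euc N) : ℝ :=
  ∑ i : Fin N, iteratedFDeriv ℝ 2 f y ![evec (i : ℕ), evec (i : ℕ)]

/-- The partial derivative in the `n`-th coordinate direction. -/
noncomputable def pd {N : ℕ} (n : ℕ) (f : Euc N → ℝ) (y : Euc N) : ℝ :=
  fderiv ℝ f y (evec n)

/-- `f` is even in each coordinate. -/
def EvenEach {N : ℕ} (f : Euc N → ℝ) : Prop :=
  ∀ (y : Euc N) (i : Fin N), f (WithLp.toLp 2 (fun j => if j = i then -(y j) else y j)) = f y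

/-- `f` is radially symmetric. -/
def Radial {N : ℕ} (f : Euc N → ℝ) : Prop :=
  ∀ x y : Euc N, ‖x‖ = ‖y‖ → f x = f y

/-- Membership in `H¹(ℝ^N)`. -/
def MemH1 {N : ℕ} (f : Euc N → ℝ) : Prop :=
  MemLp f 2 (volume : Measure (Euc N)) ∧
    MemLp (fun y => ‖fderiv ℝ f y‖) 2 (volume : Measure (Euc N))

/-- Membership in `H²(ℝ^N)`. -/
def MemH2 {N : ℕ} (f : Euc N → ℝ) : Prop :=
  MemH1 f ∧ MemLp (fun y => ‖iteratedFDeriv ℝ 2 f y‖) 2 (volume : Measure (Euc N))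

/-- Rotation by angle `θ` in the `(y₁,y₂)`-plane, identity on the other coordinates. -/
noncomputable def rot {N : ℕ} (θ : ℝ) (y : Euc N) : Euc N := WithLp.toLp 2 (fun i =>
  if (i : ℕ) = 0 then Real.cos θ * y i + Real.sin θ * y ⟨1 % N, Nat.mod_lt 1 i.pos⟩
  else if (i : ℕ) = 1 then -Real.sin θ * y ⟨0, i.pos⟩ + Real.cos θ * y i
  else y i)

/-- Vertices of a regular `k`-gon of radius `ρ` in the `(y₁,y₂)`-plane (`0`-indexed:
`peak k ρ j` is the paper's `P_{j+1}`). -/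
noncomputable def peak {N : ℕ} (k : ℕ) (ρ : ℝ) (j : ℕ) : Euc N := WithLp.toLp 2 (fun i =>
  if (i : ℕ) = 0 then ρ * Real.cos (2 * π * j / k)
  else if (i : ℕ) = 1 then ρ * Real.sin (2 * π * j / k)
  else 0)

/-- `f` is even in each coordinate and invariant under the rotation `R_{2π/k}`. -/
def Symm {N : ℕ} (k : ℕ) (f : Euc N → ℝ) : Prop :=
  EvenEach f ∧ ∀ y, f (rot (2 * π / k) y) = f y

/-- `f` is symmetric and moreover invariant under each rotation `R̂_i = R_{2πi/(mk)}`,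
`i = 1, …, m-1` (the paper's `i = 2, …, m`). -/
def FullSymm {N : ℕ} (k m : ℕ) (f : Euc N → ℝ) : Prop :=
  Symm k f ∧ ∀ i ∈ Finset.Ico 1 m, ∀ y, f (rot (2 * π * i / (m * k)) y) = f y

/-- All the data of the Lyapunov–Schmidt scheme of the paper. -/
structure Setting (N : ℕ) where
  μ₁ : ℝ
  μ₂ : ℝ
  β : ℝ
  α : ℝ
  ω₀ : ℝ
  V : Euc N → ℝ
  W : Euc N → ℝ
  Y : Euc N → ℝ
  U : Euc N → ℝ
  k : ℕ
  m : ℕ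
  d : ℝ

namespace Setting

variable {N : ℕ} (S : Setting N)

/-- The shadow potential `ω = W - βY²`. -/
noncomputable def ω (y : Euc N) : ℝ := S.W y - S.β * S.Y y ^ 2

/-- `ρ = ρ_ε = d·ε·|log ε|`. -/
noncomputable def ρ (ε : ℝ) : ℝ := S.d * ε * |Real.log ε|

/-- The scaled peaks `P_j/ε` (`0`-indexed: `Pj ε j` is the paper's `P_{j+1}/ε`). -/
noncomputable def Pj (ε : ℝ) (j : ℕ) : Euc N := ε⁻¹ • peak S.k (S.ρ ε) j

/-- The sum of bubbles `U_{ρ,ε}`. -/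
noncomputable def Urho (ε : ℝ) (y : Euc N) : ℝ :=
  ∑ j ∈ Finset.range S.k, S.U (y - S.Pj ε j)

/-- The rotations `R̂` (`Rhat i` is the paper's `R̂_{i+1}`, i.e. `Rhat 0 = id`). -/
noncomputable def Rhat (i : ℕ) (y : Euc N) : Euc N := rot (2 * π * i / (S.m * S.k)) y

/-- `Υ_ε = Y + βΦ_ε`. -/
noncomputable def Upsilon (Φ : Euc N → ℝ) (y : Euc N) : ℝ := S.Y y + S.β * Φ y

/-- `Θ_ε = U_{ρ,ε} + βΨ_ε`. -/
noncomputable def Theta (Ψ : Euc N → ℝ) (ε : ℝ) (y : Euc N) : ℝ := S.Urho ε y + S.β * Ψ y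

/-- `Z_{ε,j}` (`0`-indexed in `j`). -/
noncomputable def Zj (ε : ℝ) (j : ℕ) (y : Euc N) : ℝ :=
  -(Real.cos (2 * π * j / S.k) * pd 0 S.U (y - S.Pj ε j)
    + Real.sin (2 * π * j / S.k) * pd 1 S.U (y - S.Pj ε j))

/-- `Z_ε = Σ_j Z_{ε,j}`. -/
noncomputable def Z (ε : ℝ) (y : Euc N) : ℝ := ∑ j ∈ Finset.range S.k, S.Zj ε j y

/-- The source term of the equation defining `Φ_ε`. -/
noncomputable def Fsrc (ε : ℝ) (y : Euc N) : ℝ :=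
  S.Y y * ∑ i ∈ Finset.range S.m, (S.Urho ε (S.Rhat i (ε⁻¹ • y))) ^ 2

/-- `Φ` is the correction term `Φ_ε`: fully symmetric `H²` solution of its defining equation. -/
def IsPhi (ε : ℝ) (Φ : Euc N → ℝ) : Prop :=
  MemH2 Φ ∧ FullSymm S.k S.m Φ ∧
    ∀ y, -lap Φ y + (S.V y - 3 * S.μ₁ * S.Y y ^ 2) * Φ y = S.Fsrc ε y

/-- `Ψ` is the correction term `Ψ_ε` (relative to `Φ = Φ_ε`): symmetric `H²` solution of its
defining equation. -/
def IsPsi (ε : ℝ) (Φ Ψ : Euc N → ℝ) : Prop :=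
  MemH2 Ψ ∧ Symm S.k Ψ ∧
    ∀ y, -lap Ψ y
        + (S.ω₀ - 3 * S.μ₂ * ∑ j ∈ Finset.range S.k, (S.U (y - S.Pj ε j)) ^ 2) * Ψ y
      = 2 * S.β * Φ 0 * S.Y 0 * ∑ j ∈ Finset.range S.k, S.U (y - S.Pj ε j)

/-- The linear operator `L₁`. -/
noncomputable def L1 (Φ Ψ : Euc N → ℝ) (ε : ℝ) (φ ψ : Euc N → ℝ) (y : Euc N) : ℝ :=
  -lap φ y + S.V y * φ y
    - (3 * S.μ₁ * (S.Upsilon Φ y) ^ 2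
        + S.β * ∑ i ∈ Finset.range S.m, (S.Theta Ψ ε (S.Rhat i (ε⁻¹ • y))) ^ 2) * φ y
    - 2 * S.β * S.Upsilon Φ y *
        ∑ i ∈ Finset.range S.m, S.Theta Ψ ε (S.Rhat i (ε⁻¹ • y)) * ψ (S.Rhat i (ε⁻¹ • y))

/-- The linear operator `L₂`. -/
noncomputable def L2 (Φ Ψ : Euc N → ℝ) (ε : ℝ) (φ ψ : Euc N → ℝ) (y : Euc N) : ℝ :=
  -lap ψ y + S.W (ε • y) * ψ y
    - (3 * S.μ₂ * (S.Theta Ψ ε y) ^ 2 + S.β * (S.Upsilon Φ (ε • y)) ^ 2) * ψ y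
    - 2 * S.β * S.Theta Ψ ε y * S.Upsilon Φ (ε • y) * φ (ε • y)
    - 2 * S.α * S.Theta Ψ ε y *
        ∑ i ∈ Finset.Ico 1 S.m, S.Theta Ψ ε (S.Rhat i y) * ψ (S.Rhat i y)
    - S.α * ψ y * ∑ i ∈ Finset.Ico 1 S.m, (S.Theta Ψ ε (S.Rhat i y)) ^ 2

/-- The error term `E₁`. -/
noncomputable def E1 (Φ Ψ : Euc N → ℝ) (ε : ℝ) (y : Euc N) : ℝ :=
  3 * S.μ₁ * S.β ^ 2 * (Φ y) ^ 2 * S.Y y + S.μ₁ * S.β ^ 3 * (Φ y) ^ 3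
    + S.β ^ 3 * S.Y y * ∑ i ∈ Finset.range S.m, (Ψ (S.Rhat i (ε⁻¹ • y))) ^ 2
    + 2 * S.β ^ 2 * S.Y y *
        ∑ i ∈ Finset.range S.m, S.Urho ε (S.Rhat i (ε⁻¹ • y)) * Ψ (S.Rhat i (ε⁻¹ • y))
    + S.β ^ 2 * Φ y *
        ∑ i ∈ Finset.range S.m,
          ((S.Urho ε (S.Rhat i (ε⁻¹ • y))) ^ 2
            + 2 * S.β * S.Urho ε (S.Rhat i (ε⁻¹ • y)) * Ψ (S.Rhat i (ε⁻¹ • y))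
            + S.β ^ 2 * (Ψ (S.Rhat i (ε⁻¹ • y))) ^ 2)

/-- The error term `E₂`. -/
noncomputable def E2 (Φ Ψ : Euc N → ℝ) (ε : ℝ) (y : Euc N) : ℝ :=
  (S.ω₀ - S.ω (ε • y)) * S.Theta Ψ ε y
    + 2 * S.β ^ 2 * S.Urho ε y * (S.Y (ε • y) * Φ (ε • y) - S.Y 0 * Φ 0)
    + S.β ^ 3 * (Φ (ε • y)) ^ 2 * S.Theta Ψ ε y
    + 2 * S.β ^ 3 * Ψ y * S.Y (ε • y) * Φ (ε • y)
    + 3 * S.μ₂ * S.β ^ 2 * S.Urho ε y * (Ψ y) ^ 2 + S.μ₂ * S.β ^ 3 * (Ψ y) ^ 3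
    + S.μ₂ * ((S.Urho ε y) ^ 3 - ∑ j ∈ Finset.range S.k, (S.U (y - S.Pj ε j)) ^ 3)
    + 3 * S.μ₂ * S.β * Ψ y *
        ((S.Urho ε y) ^ 2 - ∑ j ∈ Finset.range S.k, (S.U (y - S.Pj ε j)) ^ 2)
    + S.α * S.Theta Ψ ε y * ∑ i ∈ Finset.Ico 1 S.m, (S.Theta Ψ ε (S.Rhat i y)) ^ 2

/-- The nonlinear term `N₁`. -/
noncomputable def N1 (Φ Ψ : Euc N → ℝ) (ε : ℝ) (φ ψ : Euc N → ℝ) (y : Euc N) : ℝ :=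
  S.μ₁ * (φ y) ^ 2 * (3 * S.Upsilon Φ y + φ y)
    + S.β * S.Upsilon Φ y * ∑ i ∈ Finset.range S.m, (ψ (S.Rhat i (ε⁻¹ • y))) ^ 2
    + S.β * φ y *
        ∑ i ∈ Finset.range S.m,
          (2 * S.Theta Ψ ε (S.Rhat i (ε⁻¹ • y)) * ψ (S.Rhat i (ε⁻¹ • y))
            + (ψ (S.Rhat i (ε⁻¹ • y))) ^ 2)

/-- The nonlinear term `N₂`. -/
noncomputable def N2 (Φ Ψ : Euc N → ℝ) (ε : ℝ) (φ ψ : Euc N → ℝ) (y : Euc N) : ℝ :=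
  S.μ₂ * (ψ y) ^ 2 * (3 * S.Theta Ψ ε y + ψ y)
    + S.β * ψ y * φ (ε • y) * (2 * S.Upsilon Φ (ε • y) + φ (ε • y))
    + S.β * S.Theta Ψ ε y * (φ (ε • y)) ^ 2
    + S.α * S.Theta Ψ ε y * ∑ i ∈ Finset.Ico 1 S.m, (ψ (S.Rhat i y)) ^ 2
    + S.α * ψ y *
        ∑ i ∈ Finset.Ico 1 S.m,
          (2 * S.Theta Ψ ε (S.Rhat i y) * ψ (S.Rhat i y) + (ψ (S.Rhat i y)) ^ 2)

/-- The `‖·‖_V` norm. -/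
noncomputable def normV (φ : Euc N → ℝ) : ℝ :=
  Real.sqrt (∫ y, (‖iteratedFDeriv ℝ 2 φ y‖ ^ 2 + ‖fderiv ℝ φ y‖ ^ 2 + S.V y * (φ y) ^ 2))

/-- The `‖·‖_{W_ε}` norm. -/
noncomputable def normW (ε : ℝ) (ψ : Euc N → ℝ) : ℝ :=
  Real.sqrt (∫ y, (‖iteratedFDeriv ℝ 2 ψ y‖ ^ 2 + ‖fderiv ℝ ψ y‖ ^ 2 + S.W (ε • y) * (ψ y) ^ 2))

/-- Finiteness of the `‖·‖_V` norm. -/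
def FinV (φ : Euc N → ℝ) : Prop :=
  Integrable (fun y => ‖iteratedFDeriv ℝ 2 φ y‖ ^ 2 + ‖fderiv ℝ φ y‖ ^ 2 + S.V y * (φ y) ^ 2)

/-- Finiteness of the `‖·‖_{W_ε}` norm. -/
def FinW (ε : ℝ) (ψ : Euc N → ℝ) : Prop :=
  Integrable (fun y => ‖iteratedFDeriv ℝ 2 ψ y‖ ^ 2 + ‖fderiv ℝ ψ y‖ ^ 2 + S.W (ε • y) * (ψ y) ^ 2)

/-- The balance quantity for `α = 0`:
`e^{-2√ω₀ (ρ/ε) sin(π/k)} (ρ/ε)^{-(N-1)/2}`. -/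
noncomputable def bal0 (ε : ℝ) : ℝ :=
  Real.exp (-2 * Real.sqrt S.ω₀ * (S.ρ ε / ε) * Real.sin (π / S.k))
    * (S.ρ ε / ε) ^ (-(((N : ℝ) - 1) / 2))

/-- The balance quantity for `α ≠ 0`. -/
noncomputable def balα (ε : ℝ) : ℝ :=
  if N = 2 then
    Real.exp (-4 * Real.sqrt S.ω₀ * (S.ρ ε / ε) * Real.sin (π / (S.m * S.k)))
      * (S.ρ ε / ε) ^ (-(1 / 2 : ℝ))
  else
    Real.exp (-4 * Real.sqrt S.ω₀ * (S.ρ ε / ε) * Real.sin (π / (S.m * S.k)))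
      * (S.ρ ε / ε) ^ (-(2 : ℝ)) * Real.log (S.ρ ε / ε)

/-- The quantity `e^{-2√ω₀ (ρ/ε) sin(π/(mk))} (ρ/ε)^{-(N-1)/2}` appearing in the remainder
estimates when `α ≠ 0`. -/
noncomputable def bndα (ε : ℝ) : ℝ :=
  Real.exp (-2 * Real.sqrt S.ω₀ * (S.ρ ε / ε) * Real.sin (π / (S.m * S.k)))
    * (S.ρ ε / ε) ^ (-(((N : ℝ) - 1) / 2))

/-- The balance condition when `α = 0`:  `ε·ρ ~ bal0 ε`, two-sided. -/
def Balance0 (S : Setting N) : Prop :=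
  ∃ ε' > 0, ∃ c₁ > 0, ∃ c₂ > 0, ∀ ε ∈ Set.Ioo (0 : ℝ) ε',
    c₁ * S.bal0 ε ≤ ε * S.ρ ε ∧ ε * S.ρ ε ≤ c₂ * S.bal0 ε

/-- The balance condition when `α ≠ 0`:  `ε·ρ ~ balα ε`, two-sided. -/
def Balanceα (S : Setting N) : Prop :=
  ∃ ε' > 0, ∃ c₁ > 0, ∃ c₂ > 0, ∀ ε ∈ Set.Ioo (0 : ℝ) ε',
    c₁ * S.balα ε ≤ ε * S.ρ ε ∧ ε * S.ρ ε ≤ c₂ * S.balα ε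

end Setting

/-- The `L²(ℝ^N)` norm. -/
noncomputable def l2norm {N : ℕ} (f : Euc N → ℝ) : ℝ := Real.sqrt (∫ y, (f y) ^ 2)

/-- The standing assumptions of the paper. -/
structure Hyps {N : ℕ} (S : Setting N) : Prop where
  hN : N = 2 ∨ N = 3
  hμ₁ : 0 < S.μ₁
  hμ₂ : 0 < S.μ₂
  hβ : S.β < 0
  hk : 2 ≤ S.k
  hkeven : Even S.k
  hm : 1 ≤ S.m
  hd : 0 < S.d
  hVc : Continuous S.V
  hVrad : Radial S.V
  hVpos : ∃ c > 0, ∀ y, c ≤ S.V y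
  hY3 : ContDiff ℝ 3 S.Y
  hYpos : ∀ y, 0 < S.Y y
  hYrad : Radial S.Y
  hYH2 : MemH2 S.Y
  hYeq : ∀ y, -lap S.Y y + S.V y * S.Y y = S.μ₁ * S.Y y ^ 3
  hYnd : ∀ h : Euc N → ℝ, MemH1 h →
    (∀ y, -lap h y + S.V y * h y = 3 * S.μ₁ * S.Y y ^ 2 * h y) → EvenEach h → h = 0
  hW3 : ContDiff ℝ 3 S.W
  hWrad : Radial S.W
  hWpos : ∃ c > 0, ∀ y, c ≤ S.W y
  hWbdd : ∀ n : ℕ, n ≤ 3 → ∃ C, ∀ y, ‖iteratedFDeriv ℝ n S.W y‖ ≤ C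
  hω₀ : S.ω₀ = S.ω 0
  hω₀pos : 0 < S.ω₀
  hUpos : ∀ y, 0 < S.U y
  hUrad : Radial S.U
  hUH1 : MemH1 S.U
  hU2 : ContDiff ℝ 2 S.U
  hUeq : ∀ y, -lap S.U y + S.ω₀ * S.U y = S.μ₂ * S.U y ^ 3
  hUasymp : ∃ C₀ > 0, Filter.Tendsto
    (fun y : Euc N => S.U y * Real.exp (Real.sqrt S.ω₀ * ‖y‖) * ‖y‖ ^ (((N : ℝ) - 1) / 2))
    (Filter.comap norm Filter.atTop) (nhds C₀)

theorem norm_sub_le_mul_rpow_of_norm_fderiv_le {E F : Type*}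
    [NormedAddCommGroup E] [NormedSpace ℝ E] [NormedAddCommGroup F] [NormedSpace ℝ F]
    {f : E → F} {x : E} {K α : ℝ} (hf : Differentiable ℝ f) (hα : 0 ≤ α)
    (hf' : ∀ z, ‖fderiv ℝ f z‖ ≤ K * ‖z - x‖ ^ α) (y : E) :
    ‖f y - f x‖ ≤ K * ‖y - x‖ ^ (α + 1) := by
  rcases eq_or_ne y x with rfl | hyx
  · simp [Real.zero_rpow (by linarith : α + 1 ≠ 0)]
  have hr : 0 < ‖y - x‖ := norm_pos_iff.2 (sub_ne_zero.2 hyx)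
  have hK : 0 ≤ K :=
    nonneg_of_mul_nonneg_left ((norm_nonneg _).trans (hf' y)) (Real.rpow_pos_of_pos hr α)
  have hball : ∀ z ∈ Metric.closedBall x ‖y - x‖, ‖fderiv ℝ f z‖ ≤ K * ‖y - x‖ ^ α :=
    fun z hz => (hf' z).trans <| by
      gcongr
      simpa [dist_eq_norm] using hz
  calc ‖f y - f x‖ ≤ K * ‖y - x‖ ^ α * ‖y - x‖ :=
        (convex_closedBall x ‖y - x‖).norm_image_sub_le_of_norm_fderiv_le (fun z _ => hf z)
          hball (Metric.mem_closedBall_self hr.le) (by simp [dist_eq_norm])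
    _ = K * ‖y - x‖ ^ (α + 1) := by rw [Real.rpow_add_one hr.ne', mul_assoc]

theorem Phi_pointwise_estimate_general
    (N : ℕ) (ε₁ : ℝ) (hε₁ : 0 < ε₁) (Φ : ℝ → Euc N → ℝ)
    (hΦC1 : ∀ ε ∈ Set.Ioo (0 : ℝ) ε₁, ContDiff ℝ 1 (Φ ε))
    (hΦgrad : ∀ ε ∈ Set.Ioo (0 : ℝ) ε₁, fderiv ℝ (Φ ε) 0 = 0)
    (hΦbd : ∀ q : ℝ, (N : ℝ) < q → ∃ C > 0, ∀ ε ∈ Set.Ioo (0 : ℝ) ε₁,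
      (∀ y, |Φ ε y| ≤ C * ε ^ ((N : ℝ) / q)) ∧
      (∀ y, ‖fderiv ℝ (Φ ε) y‖ ≤ C * ε ^ ((N : ℝ) / q)) ∧
      (∀ x y : Euc N, ‖fderiv ℝ (Φ ε) x - fderiv ℝ (Φ ε) y‖
          ≤ C * ε ^ ((N : ℝ) / q) * ‖x - y‖ ^ (1 - (N : ℝ) / q))) :
    ∀ q : ℝ, (N : ℝ) < q → ∃ C > 0, ∃ ε₀, 0 < ε₀ ∧ ε₀ ≤ ε₁ ∧
      ∀ ε ∈ Set.Ioo (0 : ℝ) ε₀, ∀ y : Euc N,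
        |Φ ε y - Φ ε 0| ≤ C * ε ^ ((N : ℝ) / q) * ‖y‖ ^ (2 - (N : ℝ) / q) := by
  intro q hq
  obtain ⟨C, hC, hbd⟩ := hΦbd q hq
  have hexp : (N : ℝ) / q < 1 := (div_lt_one ((Nat.cast_nonneg N).trans_lt hq)).2 hq
  refine ⟨C, hC, ε₁, hε₁, le_rfl, fun ε hε y => ?_⟩
  have hgrowth : ∀ z, ‖fderiv ℝ (Φ ε) z‖ ≤ C * ε ^ ((N : ℝ) / q) * ‖z - 0‖ ^ (1 - (N : ℝ) / q) :=
    fun z => by simpa [hΦgrad ε hε] using (hbd ε hε).2.2 z 0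
  have hΦy := norm_sub_le_mul_rpow_of_norm_fderiv_le ((hΦC1 ε hε).differentiable one_ne_zero)
    (by linarith) hgrowth y
  rwa [sub_zero, sub_add_eq_add_sub, one_add_one_eq_two] at hΦy

/-- **Remark 2.2.** Pointwise estimate `|Φ_ε(y) - Φ_ε(0)| ≲ ε^{N/q} |y|^{2-N/q}`,
deduced from `∇Φ_ε(0) = 0` and the `C^{1,1-N/q}` bound on `Φ_ε`. -/
theorem Phi_pointwise_estimate
    (N : ℕ) (S : Setting N) (H : Hyps S)
    (ε₁ : ℝ) (hε₁ : 0 < ε₁) (Φ : ℝ → Euc N → ℝ)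
    (hΦ : ∀ ε ∈ Set.Ioo (0 : ℝ) ε₁, S.IsPhi ε (Φ ε))
    (hΦC1 : ∀ ε ∈ Set.Ioo (0 : ℝ) ε₁, ContDiff ℝ 1 (Φ ε))
    (hΦgrad : ∀ ε ∈ Set.Ioo (0 : ℝ) ε₁, fderiv ℝ (Φ ε) 0 = 0)
    (hΦbd : ∀ q : ℝ, (N : ℝ) < q → ∃ C > 0, ∀ ε ∈ Set.Ioo (0 : ℝ) ε₁,
      (∀ y, |Φ ε y| ≤ C * ε ^ ((N : ℝ) / q)) ∧
      (∀ y, ‖fderiv ℝ (Φ ε) y‖ ≤ C * ε ^ ((N : ℝ) / q)) ∧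
      (∀ x y : Euc N, ‖fderiv ℝ (Φ ε) x - fderiv ℝ (Φ ε) y‖
          ≤ C * ε ^ ((N : ℝ) / q) * ‖x - y‖ ^ (1 - (N : ℝ) / q))) :
    ∀ q : ℝ, (N : ℝ) < q → ∃ C > 0, ∃ ε₀, 0 < ε₀ ∧ ε₀ ≤ ε₁ ∧
      ∀ ε ∈ Set.Ioo (0 : ℝ) ε₀, ∀ y : Euc N,
        |Φ ε y - Φ ε 0| ≤ C * ε ^ ((N : ℝ) / q) * ‖y‖ ^ (2 - (N : ℝ) / q) :=
  Phi_pointwise_estimate_general N ε₁ hε₁ Φ hΦC1 hΦgrad hΦbd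
end
end

section
/- Let u, v : ℝ^N → ℝ be positive continuous radial functions, a, a′ ∈ ℝ and 0 < b < b′, and suppose there exist R₀ > 0 and constants 0 < k₁ ≤ k₂ such that k₁·|x|^a·e^{−b|x|} ≤ u(x) ≤ k₂·|x|^a·e^{−b|x|} and k₁·|x|^{a′}·e^{−b′|x|} ≤ v(x) ≤ k₂·|x|^{a′}·e^{−b′|x|} for all |x| ≥ R₀. Then there exist R ≥ R₀ and constants 0 < c₁ ≤ c₂ such that for every ξ ∈ ℝ^N with |ξ| ≥ R, c₁·e^{−b|ξ|}·|ξ|^a ≤ ∫_{ℝ^N} u(x + ξ)·v(x) dx ≤ c₂·e^{−b|ξ|}·|ξ|^a. -/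
noncomputable section

open Real MeasureTheory Filter Set

/-!
Split the integral at `‖x‖ = ‖ξ‖ / 2`. Where `‖x‖ ≤ ‖ξ‖ / 2`, the norm of `x + ξ` is within a
factor `2` of `‖ξ‖`, so `u (x + ξ) ≲ ‖ξ‖ ^ a e^{-b‖ξ‖} e^{b‖x‖}`, and `e^{b‖x‖} v x` still decays
exponentially because `b < b'`. Where `‖x‖ ≥ ‖ξ‖ / 2`, the crude bounds
`u ≲ e^{-(b - ε)‖·‖}`, `v ≲ e^{-(b' - ε)‖·‖}` (for a small `ε > 0`) and the triangle inequality
leave an extra factor `e^{-(b' - b)‖ξ‖ / 8}`, which beats any power of `‖ξ‖`. So `u (x + ξ) v x ≲ ‖ξ‖ ^ a e^{-b‖ξ‖} e^{-(b' - b)‖x‖ / 2}`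
everywhere, which gives integrability and the upper bound. For the lower bound, restrict to the
unit ball, where `u (x + ξ) ≳ ‖ξ‖ ^ a e^{-b‖ξ‖}` and `v` is bounded below by a positive constant.
-/

open Metric

theorem exists_rpow_mul_exp_neg_mul_le (s : ℝ) {γ r : ℝ} (hγ : 0 < γ) (hr : 0 < r) :
    ∃ C, ∀ t, r ≤ t → t ^ s * exp (-γ * t) ≤ C := by
  obtain ⟨T, hT⟩ := ((tendsto_rpow_mul_exp_neg_mul_atTop_nhds_zero s γ hγ).eventually
    (eventually_le_nhds one_pos)).exists_forall_of_atTop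
  have hcont : ContinuousOn (fun t : ℝ => t ^ s * exp (-γ * t)) (Icc r T) := fun t ht =>
    ((continuousAt_id.rpow_const (.inl (hr.trans_le ht.1).ne')).mul
      (by fun_prop)).continuousWithinAt
  obtain ⟨C, hC⟩ := isCompact_Icc.bddAbove_image hcont
  refine ⟨max C 1, fun t ht => ?_⟩
  rcases le_total t T with htT | hTt
  · exact (hC (mem_image_of_mem _ ⟨ht, htT⟩)).trans (le_max_left _ _)
  · exact (hT t hTt).trans (le_max_right _ _)

theorem exists_exp_neg_mul_le_mul_rpow (a : ℝ) {γ r : ℝ} (hγ : 0 < γ) (hr : 0 < r) :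
    ∃ C, ∀ t, r ≤ t → exp (-γ * t) ≤ C * t ^ a := by
  obtain ⟨C, hC⟩ := exists_rpow_mul_exp_neg_mul_le (-a) hγ hr
  refine ⟨C, fun t ht => ?_⟩
  have ht0 : 0 < t := hr.trans_le ht
  have := hC t ht
  rw [rpow_neg ht0.le, inv_mul_le_iff₀ (rpow_pos_of_pos ht0 a)] at this
  linarith [mul_comm (t ^ a) C]

theorem rpow_le_two_rpow_abs_mul_rpow (a : ℝ) {s t : ℝ} (ht : 0 < t) (hts : t ≤ 2 * s)
    (hst : s ≤ 2 * t) : t ^ a ≤ 2 ^ |a| * s ^ a := by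
  have hs : 0 < s := by linarith
  rcases le_total 0 a with ha | ha
  · calc t ^ a ≤ (2 * s) ^ a := rpow_le_rpow ht.le hts ha
      _ = 2 ^ |a| * s ^ a := by rw [abs_of_nonneg ha, mul_rpow zero_le_two hs.le]
  · calc t ^ a ≤ (s / 2) ^ a := rpow_le_rpow_of_nonpos (by positivity) (by linarith) ha
      _ = 2 ^ |a| * s ^ a := by
        rw [abs_of_nonpos ha, div_rpow hs.le zero_le_two, rpow_neg zero_le_two, div_eq_inv_mul]

theorem rpow_mul_exp_neg_le {a b d s t : ℝ} (hb : 0 ≤ b) (ht : 0 < t) (hts : t ≤ 2 * s)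
    (hst : s ≤ 2 * t) (hd : |t - s| ≤ d) :
    t ^ a * exp (-b * t) ≤ 2 ^ |a| * exp (b * d) * (s ^ a * exp (-b * s)) := by
  have hexp : exp (-b * t) ≤ exp (b * d) * exp (-b * s) := by
    rw [← exp_add, exp_le_exp]
    nlinarith [neg_abs_le (t - s)]
  calc t ^ a * exp (-b * t) ≤ (2 ^ |a| * s ^ a) * (exp (b * d) * exp (-b * s)) :=
        mul_le_mul (rpow_le_two_rpow_abs_mul_rpow a ht hts hst) hexp (exp_pos _).le
          (mul_nonneg (by positivity) (rpow_nonneg (by linarith) _))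
    _ = _ := by ring

section NormedGroup

variable {E : Type*} [SeminormedAddCommGroup E]

theorem abs_norm_add_sub_norm_le (x ξ : E) : |‖x + ξ‖ - ‖ξ‖| ≤ ‖x‖ := by
  simpa using abs_norm_sub_norm_le (x + ξ) ξ

theorem norm_add_rpow_mul_exp_le {a b : ℝ} (hb : 0 ≤ b) {x ξ : E} (hξ : 0 < ‖ξ‖)
    (hx : ‖x‖ ≤ ‖ξ‖ / 2) :
    ‖x + ξ‖ ^ a * exp (-b * ‖x + ξ‖) ≤ 2 ^ |a| * exp (b * ‖x‖) * (‖ξ‖ ^ a * exp (-b * ‖ξ‖)) ∧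
    ‖ξ‖ ^ a * exp (-b * ‖ξ‖) ≤ 2 ^ |a| * exp (b * ‖x‖) * (‖x + ξ‖ ^ a * exp (-b * ‖x + ξ‖)) := by
  have hd := abs_norm_add_sub_norm_le x ξ
  obtain ⟨h₁, h₂⟩ := abs_le.1 hd
  exact ⟨rpow_mul_exp_neg_le hb (by linarith) (by linarith) (by linarith) hd,
    rpow_mul_exp_neg_le hb hξ (by linarith) (by linarith) (by rwa [abs_sub_comm])⟩

theorem mul_le_of_norm_le_half {u v : E → ℝ} {a b b₂ k K R₀ : ℝ} (hb : 0 ≤ b) (hk : 0 ≤ k)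
    (hub : ∀ y, R₀ ≤ ‖y‖ → u y ≤ k * ‖y‖ ^ a * exp (-b * ‖y‖))
    (hv0 : ∀ y, 0 ≤ v y) (hvb : ∀ y, v y ≤ K * exp (-b₂ * ‖y‖))
    {x ξ : E} (hξ : 0 < ‖ξ‖) (hR₀ : 2 * R₀ ≤ ‖ξ‖) (hx : ‖x‖ ≤ ‖ξ‖ / 2) :
    u (x + ξ) * v x ≤
      k * 2 ^ |a| * K * (exp (-b * ‖ξ‖) * ‖ξ‖ ^ a) * exp (-(b₂ - b) * ‖x‖) := by
  have hR : R₀ ≤ ‖x + ξ‖ := by linarith [(abs_le.1 (abs_norm_add_sub_norm_le x ξ)).1]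
  have hu : u (x + ξ) ≤ k * (2 ^ |a| * exp (b * ‖x‖) * (‖ξ‖ ^ a * exp (-b * ‖ξ‖))) :=
    calc u (x + ξ) ≤ k * (‖x + ξ‖ ^ a * exp (-b * ‖x + ξ‖)) := by rw [← mul_assoc]; exact hub _ hR
      _ ≤ _ := mul_le_mul_of_nonneg_left (norm_add_rpow_mul_exp_le hb hξ hx).1 hk
  calc u (x + ξ) * v x
      ≤ k * (2 ^ |a| * exp (b * ‖x‖) * (‖ξ‖ ^ a * exp (-b * ‖ξ‖))) * (K * exp (-b₂ * ‖x‖)) :=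
        mul_le_mul hu (hvb x) (hv0 x) (by positivity)
    _ = _ := by
      rw [show -(b₂ - b) * ‖x‖ = b * ‖x‖ + -b₂ * ‖x‖ by ring, exp_add]
      ring

theorem mul_le_of_half_le_norm {u v : E → ℝ} {b₁ b₂ K K' : ℝ} (hb₁ : 0 ≤ b₁) (hb₁₂ : b₁ ≤ b₂)
    (hK : 0 ≤ K) (hK' : 0 ≤ K') (hub : ∀ y, u y ≤ K * exp (-b₁ * ‖y‖))
    (hv0 : ∀ y, 0 ≤ v y) (hvb : ∀ y, v y ≤ K' * exp (-b₂ * ‖y‖))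
    {x ξ : E} (hx : ‖ξ‖ / 2 ≤ ‖x‖) :
    u (x + ξ) * v x ≤
      K * K' * exp (-(b₁ + (b₂ - b₁) / 4) * ‖ξ‖) * exp (-((b₂ - b₁) / 2) * ‖x‖) := by
  have hexp : exp (-b₁ * ‖x + ξ‖) * exp (-b₂ * ‖x‖) ≤
      exp (-(b₁ + (b₂ - b₁) / 4) * ‖ξ‖) * exp (-((b₂ - b₁) / 2) * ‖x‖) := by
    rw [← exp_add, ← exp_add, exp_le_exp]
    have htri : ‖ξ‖ - ‖x‖ ≤ ‖x + ξ‖ := by linarith [(abs_le.1 (abs_norm_add_sub_norm_le x ξ)).1]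
    nlinarith [mul_le_mul_of_nonneg_left htri hb₁, mul_le_mul_of_nonneg_left hx (sub_nonneg.2 hb₁₂)]
  calc u (x + ξ) * v x ≤ (K * exp (-b₁ * ‖x + ξ‖)) * (K' * exp (-b₂ * ‖x‖)) :=
        mul_le_mul (hub _) (hvb x) (hv0 x) (by positivity)
    _ = K * K' * (exp (-b₁ * ‖x + ξ‖) * exp (-b₂ * ‖x‖)) := by ring
    _ ≤ _ := by rw [mul_assoc (K * K')]; exact mul_le_mul_of_nonneg_left hexp (by positivity)

end NormedGroup

section ProperSpace

variable {E : Type*} [SeminormedAddCommGroup E] [ProperSpace E]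

theorem exists_le_mul_exp_neg_norm {f : E → ℝ} (hf : Continuous f) {k a b b₁ R₀ : ℝ}
    (hR₀ : 0 < R₀) (hb₁ : b₁ < b)
    (hfb : ∀ y, R₀ ≤ ‖y‖ → f y ≤ k * ‖y‖ ^ a * exp (-b * ‖y‖)) :
    ∃ K, 0 ≤ K ∧ ∀ y, f y ≤ K * exp (-b₁ * ‖y‖) := by
  obtain ⟨C, hC⟩ := exists_rpow_mul_exp_neg_mul_le a (sub_pos.2 hb₁) hR₀
  obtain ⟨M, hM⟩ := (isCompact_closedBall (0 : E) R₀).exists_bound_of_continuousOn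
    (hf.mul (by fun_prop : Continuous fun y : E => exp (b₁ * ‖y‖))).continuousOn
  have hbound : ∀ y, f y * exp (b₁ * ‖y‖) ≤ max M (|k| * C) := by
    intro y
    rcases le_total ‖y‖ R₀ with hy | hy
    · exact (le_abs_self _).trans ((hM y (mem_closedBall_zero_iff.2 hy)).trans (le_max_left _ _))
    · have hX : 0 ≤ ‖y‖ ^ a * exp (-(b - b₁) * ‖y‖) := by positivity
      calc f y * exp (b₁ * ‖y‖) ≤ k * ‖y‖ ^ a * exp (-b * ‖y‖) * exp (b₁ * ‖y‖) :=
            mul_le_mul_of_nonneg_right (hfb y hy) (exp_pos _).le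
        _ = k * (‖y‖ ^ a * exp (-(b - b₁) * ‖y‖)) := by
            rw [mul_assoc, ← exp_add]; ring_nf
        _ ≤ |k| * (‖y‖ ^ a * exp (-(b - b₁) * ‖y‖)) := mul_le_mul_of_nonneg_right (le_abs_self k) hX
        _ ≤ |k| * C := mul_le_mul_of_nonneg_left (hC _ hy) (abs_nonneg k)
        _ ≤ _ := le_max_right _ _
  refine ⟨max M (|k| * C),
    (norm_nonneg _).trans ((hM 0 (mem_closedBall_self hR₀.le)).trans (le_max_left _ _)),
    fun y => ?_⟩
  calc f y = f y * exp (b₁ * ‖y‖) * exp (-b₁ * ‖y‖) := by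
        rw [mul_assoc, ← exp_add]; simp
    _ ≤ _ := mul_le_mul_of_nonneg_right (hbound y) (exp_pos _).le

theorem exists_mul_le_mul_exp_neg_norm {u v : E → ℝ} (hu : Continuous u) (hv : Continuous v)
    (hv0 : ∀ x, 0 ≤ v x) {a a' b b' k R₀ : ℝ} (hb : 0 < b) (hbb' : b < b') (hk : 0 ≤ k)
    (hR₀ : 0 < R₀) (hub : ∀ y, R₀ ≤ ‖y‖ → u y ≤ k * ‖y‖ ^ a * exp (-b * ‖y‖))
    (hvb : ∀ y, R₀ ≤ ‖y‖ → v y ≤ k * ‖y‖ ^ a' * exp (-b' * ‖y‖)) :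
    ∃ C R, ∀ ξ : E, R ≤ ‖ξ‖ → ∀ x,
      u (x + ξ) * v x ≤ C * (exp (-b * ‖ξ‖) * ‖ξ‖ ^ a) * exp (-((b' - b) / 2) * ‖x‖) := by
  -- `ε ≤ b` keeps the rate `b - ε` nonnegative, as the far-region estimate needs, and
  -- `ε ≤ (b' - b) / 8` leaves a gain `e^{-(b' - b)‖ξ‖ / 8}` there.
  set ε := min b (b' - b) / 8 with hε
  have hε0 : 0 < ε := by have := lt_min hb (sub_pos.2 hbb'); positivity
  have hεb : ε ≤ b := by linarith [min_le_left b (b' - b)]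
  have hεβ : ε ≤ (b' - b) / 8 := by linarith [min_le_right b (b' - b)]
  obtain ⟨Ku, hKu, hu'⟩ := exists_le_mul_exp_neg_norm (b₁ := b - ε) hu hR₀ (by linarith) hub
  obtain ⟨Kv, hKv, hv'⟩ := exists_le_mul_exp_neg_norm (b₁ := b' - ε) hv hR₀ (by linarith) hvb
  obtain ⟨C₀, hC₀⟩ := exists_exp_neg_mul_le_mul_rpow a (γ := (b' - b) / 8) (by linarith) one_pos
  refine ⟨max (k * 2 ^ |a| * Kv) (Ku * Kv * C₀), max (2 * R₀) 1, fun ξ hξ x => ?_⟩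
  have hξ1 : 1 ≤ ‖ξ‖ := (le_max_right _ _).trans hξ
  have hξ0 : 0 < ‖ξ‖ := by linarith
  rcases le_total ‖x‖ (‖ξ‖ / 2) with hx | hx
  · calc u (x + ξ) * v x
        ≤ k * 2 ^ |a| * Kv * (exp (-b * ‖ξ‖) * ‖ξ‖ ^ a) * exp (-((b' - ε) - b) * ‖x‖) :=
          mul_le_of_norm_le_half hb.le hk hub hv0 hv' hξ0 ((le_max_left _ _).trans hξ) hx
      _ ≤ _ := by
          gcongr
          · exact le_max_left _ _
          · linarith
  · have hexp : exp (-((b - ε) + (b' - b) / 4) * ‖ξ‖) ≤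
        C₀ * (exp (-b * ‖ξ‖) * ‖ξ‖ ^ a) :=
      calc _ ≤ exp (-b * ‖ξ‖ + -((b' - b) / 8) * ‖ξ‖) := exp_le_exp.2 (by nlinarith)
        _ ≤ exp (-b * ‖ξ‖) * (C₀ * ‖ξ‖ ^ a) := by rw [exp_add]; gcongr; exact hC₀ _ hξ1
        _ = _ := by ring
    calc u (x + ξ) * v x
        ≤ Ku * Kv * exp (-((b - ε) + (b' - b) / 4) * ‖ξ‖) * exp (-((b' - b) / 2) * ‖x‖) := by
          simpa only [sub_sub_sub_cancel_right] using
            mul_le_of_half_le_norm (by linarith) (by linarith) hKu hKv hu' hv0 hv' hx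
      _ ≤ Ku * Kv * (C₀ * (exp (-b * ‖ξ‖) * ‖ξ‖ ^ a)) * exp (-((b' - b) / 2) * ‖x‖) := by
          gcongr
      _ ≤ _ := by
          rw [← mul_assoc]
          gcongr
          exact le_max_right _ _

theorem exists_le_mul_of_mem_closedBall {u v : E → ℝ} (hv : Continuous v)
    (hvpos : ∀ x, 0 < v x) {a b k R₀ : ℝ} (hb : 0 ≤ b) (hk : 0 < k)
    (hub : ∀ y, R₀ ≤ ‖y‖ → k * ‖y‖ ^ a * exp (-b * ‖y‖) ≤ u y) :
    ∃ c, 0 < c ∧ ∃ R, ∀ ξ : E, R ≤ ‖ξ‖ → ∀ x ∈ closedBall (0 : E) 1,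
      c * (exp (-b * ‖ξ‖) * ‖ξ‖ ^ a) ≤ u (x + ξ) * v x := by
  obtain ⟨x₀, -, hx₀⟩ := (isCompact_closedBall (0 : E) 1).exists_isMinOn
    ⟨0, mem_closedBall_self zero_le_one⟩ hv.continuousOn
  have hx₀pos := hvpos x₀
  refine ⟨k * v x₀ / (2 ^ |a| * exp b), by positivity, max (R₀ + 1) 2, fun ξ hξ x hx => ?_⟩
  have hx1 : ‖x‖ ≤ 1 := mem_closedBall_zero_iff.1 hx
  have hξR₀ : R₀ + 1 ≤ ‖ξ‖ := (le_max_left _ _).trans hξ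
  have hξ2 : 2 ≤ ‖ξ‖ := (le_max_right _ _).trans hξ
  have hR : R₀ ≤ ‖x + ξ‖ := by linarith [(abs_le.1 (abs_norm_add_sub_norm_le x ξ)).1]
  have hu0 : 0 ≤ u (x + ξ) :=
    (by positivity : (0 : ℝ) ≤ k * ‖x + ξ‖ ^ a * exp (-b * ‖x + ξ‖)).trans (hub _ hR)
  have hu : k * (exp (-b * ‖ξ‖) * ‖ξ‖ ^ a) ≤ 2 ^ |a| * exp b * u (x + ξ) :=
    calc k * (exp (-b * ‖ξ‖) * ‖ξ‖ ^ a)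
        ≤ k * (2 ^ |a| * exp (b * ‖x‖) * (‖x + ξ‖ ^ a * exp (-b * ‖x + ξ‖))) := by
          rw [mul_comm (exp _)]
          exact mul_le_mul_of_nonneg_left
            (norm_add_rpow_mul_exp_le hb (by linarith) (by linarith)).2 hk.le
      _ ≤ k * (2 ^ |a| * exp b * (‖x + ξ‖ ^ a * exp (-b * ‖x + ξ‖))) := by
          gcongr
          nlinarith
      _ = 2 ^ |a| * exp b * (k * ‖x + ξ‖ ^ a * exp (-b * ‖x + ξ‖)) := by ring
      _ ≤ 2 ^ |a| * exp b * u (x + ξ) := by gcongr; exact hub _ hR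
  calc k * v x₀ / (2 ^ |a| * exp b) * (exp (-b * ‖ξ‖) * ‖ξ‖ ^ a)
      = k * (exp (-b * ‖ξ‖) * ‖ξ‖ ^ a) * v x₀ / (2 ^ |a| * exp b) := by ring
    _ ≤ 2 ^ |a| * exp b * u (x + ξ) * v x₀ / (2 ^ |a| * exp b) := by gcongr
    _ = u (x + ξ) * v x₀ := by field_simp
    _ ≤ u (x + ξ) * v x := mul_le_mul_of_nonneg_left (hx₀ hx) hu0

end ProperSpace

theorem integrable_exp_neg_mul_norm {E : Type*} [NormedAddCommGroup E] [NormedSpace ℝ E]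
    [FiniteDimensional ℝ E] [MeasurableSpace E] [BorelSpace E] (μ : Measure E)
    [μ.IsAddHaarMeasure] {γ : ℝ} (hγ : 0 < γ) :
    Integrable (fun x : E => exp (-γ * ‖x‖)) μ := by
  obtain ⟨C, hC⟩ := exists_rpow_mul_exp_neg_mul_le (Module.finrank ℝ E + 1) hγ one_pos
  refine ((integrable_one_add_norm (μ := μ) (r := Module.finrank ℝ E + 1) (by simp)).const_mul
    (C * exp γ)).mono' (by fun_prop) (.of_forall fun x => ?_)
  have h1 : 0 < 1 + ‖x‖ := by positivity
  rw [norm_of_nonneg (exp_pos _).le, rpow_neg h1.le, ← div_eq_mul_inv,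
    le_div_iff₀ (by positivity)]
  calc exp (-γ * ‖x‖) * (1 + ‖x‖) ^ ((Module.finrank ℝ E : ℝ) + 1)
      = (1 + ‖x‖) ^ ((Module.finrank ℝ E : ℝ) + 1) * exp (-γ * (1 + ‖x‖)) * exp γ := by
        rw [mul_assoc, ← exp_add]; ring_nf
    _ ≤ C * exp γ := by gcongr; exact hC _ (by simp)

theorem interaction_estimate_different_rates_general
    (N : ℕ)
    (u v : Euc N → ℝ) (hu : Continuous u) (hv : Continuous v)
    (hupos : ∀ x, 0 < u x) (hvpos : ∀ x, 0 < v x)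
    (a a' b b' : ℝ) (hb : 0 < b) (hbb' : b < b')
    (R₀ k₁ k₂ : ℝ) (hR₀ : 0 < R₀) (hk₁ : 0 < k₁) (hk₁₂ : k₁ ≤ k₂)
    (hub : ∀ x : Euc N, R₀ ≤ ‖x‖ →
      k₁ * ‖x‖ ^ a * Real.exp (-b * ‖x‖) ≤ u x ∧ u x ≤ k₂ * ‖x‖ ^ a * Real.exp (-b * ‖x‖))
    (hvb : ∀ x : Euc N, R₀ ≤ ‖x‖ →
      k₁ * ‖x‖ ^ a' * Real.exp (-b' * ‖x‖) ≤ v x ∧ v x ≤ k₂ * ‖x‖ ^ a' * Real.exp (-b' * ‖x‖)) :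
    ∃ R, R₀ ≤ R ∧ ∃ c₁ c₂ : ℝ, 0 < c₁ ∧ c₁ ≤ c₂ ∧
      ∀ ξ : Euc N, R ≤ ‖ξ‖ →
        Integrable (fun x => u (x + ξ) * v x) ∧
        c₁ * Real.exp (-b * ‖ξ‖) * ‖ξ‖ ^ a ≤ (∫ x, u (x + ξ) * v x) ∧
        (∫ x, u (x + ξ) * v x) ≤ c₂ * Real.exp (-b * ‖ξ‖) * ‖ξ‖ ^ a := by
  obtain ⟨C, R₁, hupper⟩ := exists_mul_le_mul_exp_neg_norm hu hv (fun x => (hvpos x).le) hb hbb'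
    (hk₁.le.trans hk₁₂) hR₀ (fun y hy => (hub y hy).2) (fun y hy => (hvb y hy).2)
  obtain ⟨c, hc, R₂, hlower⟩ :=
    exists_le_mul_of_mem_closedBall hv hvpos hb.le hk₁ (fun y hy => (hub y hy).1)
  have hball : 0 < volume.real (closedBall (0 : Euc N) 1) :=
    ENNReal.toReal_pos (measure_closedBall_pos _ _ one_pos).ne' measure_closedBall_lt_top.ne
  have hexp := integrable_exp_neg_mul_norm (volume : Measure (Euc N)) (γ := (b' - b) / 2)
    (by linarith)
  set c₁ := c * volume.real (closedBall (0 : Euc N) 1)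
  set I := ∫ x : Euc N, exp (-((b' - b) / 2) * ‖x‖)
  refine ⟨max R₀ (max R₁ R₂), le_max_left _ _, c₁, max c₁ (C * I), by positivity, le_max_left _ _,
    fun ξ hξ => ?_⟩
  have hR₁ : R₁ ≤ ‖ξ‖ := le_trans (by simp) hξ
  have hR₂ : R₂ ≤ ‖ξ‖ := le_trans (by simp) hξ
  have hint : Integrable (fun x => u (x + ξ) * v x) :=
    (hexp.const_mul _).mono' (by fun_prop) (.of_forall fun x => by
      rw [norm_of_nonneg (mul_pos (hupos _) (hvpos x)).le]; exact hupper ξ hR₁ x)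
  refine ⟨hint, ?_, ?_⟩
  · calc c₁ * exp (-b * ‖ξ‖) * ‖ξ‖ ^ a
        = c * (exp (-b * ‖ξ‖) * ‖ξ‖ ^ a) * volume.real (closedBall (0 : Euc N) 1) := by ring
      _ ≤ ∫ x in closedBall 0 1, u (x + ξ) * v x :=
        setIntegral_ge_of_const_le_real measurableSet_closedBall measure_closedBall_lt_top.ne
          (hlower ξ hR₂) hint.integrableOn
      _ ≤ ∫ x, u (x + ξ) * v x :=
        setIntegral_le_integral hint (.of_forall fun x => (mul_pos (hupos _) (hvpos x)).le)
  · calc ∫ x, u (x + ξ) * v x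
        ≤ ∫ x, C * (exp (-b * ‖ξ‖) * ‖ξ‖ ^ a) * exp (-((b' - b) / 2) * ‖x‖) :=
          integral_mono hint (hexp.const_mul _) (hupper ξ hR₁)
      _ = C * I * exp (-b * ‖ξ‖) * ‖ξ‖ ^ a := by
          rw [integral_const_mul]; ring
      _ ≤ _ := by gcongr; exact le_max_right _ _

/-- **Lemma A.1 (i).** Interaction integral of two exponentially decaying radial functions:
the case `b < b′`. -/
theorem interaction_estimate_different_rates
    (N : ℕ) (hN : 1 ≤ N)
    (u v : Euc N → ℝ) (hu : Continuous u) (hv : Continuous v)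
    (hupos : ∀ x, 0 < u x) (hvpos : ∀ x, 0 < v x)
    (hurad : Radial u) (hvrad : Radial v)
    (a a' b b' : ℝ) (hb : 0 < b) (hbb' : b < b')
    (R₀ k₁ k₂ : ℝ) (hR₀ : 0 < R₀) (hk₁ : 0 < k₁) (hk₁₂ : k₁ ≤ k₂)
    (hub : ∀ x : Euc N, R₀ ≤ ‖x‖ →
      k₁ * ‖x‖ ^ a * Real.exp (-b * ‖x‖) ≤ u x ∧ u x ≤ k₂ * ‖x‖ ^ a * Real.exp (-b * ‖x‖))
    (hvb : ∀ x : Euc N, R₀ ≤ ‖x‖ →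
      k₁ * ‖x‖ ^ a' * Real.exp (-b' * ‖x‖) ≤ v x ∧ v x ≤ k₂ * ‖x‖ ^ a' * Real.exp (-b' * ‖x‖)) :
    ∃ R, R₀ ≤ R ∧ ∃ c₁ c₂ : ℝ, 0 < c₁ ∧ c₁ ≤ c₂ ∧
      ∀ ξ : Euc N, R ≤ ‖ξ‖ →
        Integrable (fun x => u (x + ξ) * v x) ∧
        c₁ * Real.exp (-b * ‖ξ‖) * ‖ξ‖ ^ a ≤ (∫ x, u (x + ξ) * v x) ∧
        (∫ x, u (x + ξ) * v x) ≤ c₂ * Real.exp (-b * ‖ξ‖) * ‖ξ‖ ^ a :=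
  interaction_estimate_different_rates_general N u v hu hv hupos hvpos a a' b b' hb hbb' R₀ k₁ k₂
    hR₀ hk₁ hk₁₂ hub hvb
end
end

section
/- Let N ∈ {2,3} and let A > 0, B > 0, ω₀ > 0 and s ∈ (0, 1] be real constants. Then there exists ε₀ ∈ (0, 1) such that for every ε ∈ (0, ε₀) there exists d_ε ∈ (0, 1/(√ω₀·s)) with A·ε²·d_ε·|log ε| = B·e^{−2√ω₀·s·d_ε·|log ε|}·(d_ε·|log ε|)^{−(N−1)/2}, and moreover d_ε → 1/(√ω₀·s) as ε → 0⁺. -/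
noncomputable section

open Real Filter Set Topology

/-! With `L = |log ε|`, `t = d·L`, `c = √ω₀·s` and `q = 1 + (N-1)/2`, the equation reads
`t^q·e^{2ct} = (B/A)·e^{2L}`. Its left side is a strictly increasing continuous bijection of
`[0, ∞)`, so there is exactly one root `t(L)`. At `t = L/c` the left side is `(L/c)^q·e^{2L}`,
which exceeds the right side once `(L/c)^q > B/A`, so `t(L) < L/c`; at `t = rL` with `r < 1/c`
it is `(rL)^q·e^{2crL} = o(e^{2L})`, so `t(L) > rL` for large `L`. Hence `d = t(L)/L → 1/c`. -/

def expProfile (q a t : ℝ) : ℝ := t ^ q * exp (a * t)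

def expProfileInv (q a y : ℝ) : ℝ := Function.invFunOn (expProfile q a) (Ici 0) y

section Profile

variable {q a : ℝ}

lemma expProfile_zero (hq : 0 < q) : expProfile q a 0 = 0 := by
  simp [expProfile, zero_rpow hq.ne']

lemma continuous_expProfile (hq : 0 ≤ q) : Continuous (expProfile q a) :=
  (continuous_rpow_const hq).mul (continuous_exp.comp (continuous_const.mul continuous_id))

lemma strictMonoOn_expProfile (hq : 0 < q) (ha : 0 ≤ a) : StrictMonoOn (expProfile q a) (Ici 0) :=
  fun _ hx _ _ hxy => mul_lt_mul (rpow_lt_rpow hx hxy hq)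
    (exp_le_exp.2 (by gcongr)) (exp_pos _) (rpow_nonneg (hx.out.trans hxy.le) q)

lemma tendsto_expProfile_atTop (hq : 0 < q) (ha : 0 ≤ a) :
    Tendsto (expProfile q a) atTop atTop := by
  refine tendsto_atTop_mono' atTop ?_ (tendsto_rpow_atTop hq)
  filter_upwards [eventually_ge_atTop 0] with t ht
  exact le_mul_of_one_le_right (by positivity) (one_le_exp (by positivity))

lemma surjOn_expProfile (hq : 0 < q) (ha : 0 ≤ a) :
    SurjOn (expProfile q a) (Ici 0) (Ici 0) := by
  intro y hy
  obtain ⟨T, hT, hyT⟩ : ∃ T, 0 ≤ T ∧ y ≤ expProfile q a T :=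
    ((eventually_ge_atTop 0).and
      ((tendsto_expProfile_atTop hq ha).eventually_ge_atTop y)).exists
  obtain ⟨t, ht, hty⟩ := intermediate_value_Icc hT (continuous_expProfile hq.le).continuousOn
    ⟨(expProfile_zero hq).trans_le hy, hyT⟩
  exact ⟨t, ht.1, hty⟩

lemma expProfileInv_nonneg (hq : 0 < q) (ha : 0 ≤ a) {y : ℝ} (hy : 0 ≤ y) :
    0 ≤ expProfileInv q a y :=
  Function.invFunOn_mem (surjOn_expProfile hq ha hy)

lemma expProfile_expProfileInv (hq : 0 < q) (ha : 0 ≤ a) {y : ℝ} (hy : 0 ≤ y) :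
    expProfile q a (expProfileInv q a y) = y :=
  Function.invFunOn_eq (surjOn_expProfile hq ha hy)

lemma lt_expProfileInv_iff (hq : 0 < q) (ha : 0 ≤ a) {x y : ℝ} (hy : 0 ≤ y) (hx : 0 ≤ x) :
    x < expProfileInv q a y ↔ expProfile q a x < y := by
  conv_rhs => rw [← expProfile_expProfileInv hq ha hy]
  exact ((strictMonoOn_expProfile hq ha).lt_iff_lt hx (expProfileInv_nonneg hq ha hy)).symm

lemma expProfileInv_lt_iff (hq : 0 < q) (ha : 0 ≤ a) {x y : ℝ} (hy : 0 ≤ y) (hx : 0 ≤ x) :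
    expProfileInv q a y < x ↔ y < expProfile q a x := by
  conv_rhs => rw [← expProfile_expProfileInv hq ha hy]
  exact ((strictMonoOn_expProfile hq ha).lt_iff_lt (expProfileInv_nonneg hq ha hy) hx).symm

end Profile

def balanceRoot (q c K L : ℝ) : ℝ := expProfileInv q (2 * c) (K * exp (2 * L))

section BalanceRoot

variable {q c K : ℝ}

lemma balanceRoot_pos (hq : 0 < q) (hc : 0 < c) (hK : 0 < K) (L : ℝ) :
    0 < balanceRoot q c K L := by
  rw [balanceRoot, lt_expProfileInv_iff hq (by positivity) (by positivity) le_rfl,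
    expProfile_zero hq]
  positivity

lemma eventually_balanceRoot_lt_div (hq : 0 < q) (hc : 0 < c) (hK : 0 < K) :
    ∀ᶠ L in atTop, balanceRoot q c K L < L / c := by
  have hlarge :=
    ((tendsto_rpow_atTop hq).comp (tendsto_id.atTop_div_const hc)).eventually_gt_atTop K
  filter_upwards [hlarge, eventually_ge_atTop 0] with L hKL hL
  rw [balanceRoot, expProfileInv_lt_iff hq (by positivity) (by positivity) (by positivity),
    expProfile, mul_assoc, mul_div_cancel₀ L hc.ne']
  exact mul_lt_mul_of_pos_right hKL (exp_pos _)

lemma eventually_mul_lt_balanceRoot (hq : 0 < q) (hc : 0 < c) (hK : 0 < K) {r : ℝ}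
    (hr : 0 ≤ r) (hcr : c * r < 1) :
    ∀ᶠ L in atTop, r * L < balanceRoot q c K L := by
  have hsmall := ((tendsto_rpow_mul_exp_neg_mul_atTop_nhds_zero q (2 - 2 * c * r)
    (by linarith)).const_mul (r ^ q)).eventually_lt_const (by simpa using hK)
  filter_upwards [hsmall, eventually_ge_atTop 0] with L hKL hL
  rw [balanceRoot, lt_expProfileInv_iff hq (by positivity) (by positivity) (by positivity)]
  calc expProfile q (2 * c) (r * L)
      = r ^ q * (L ^ q * exp (-(2 - 2 * c * r) * L)) * exp (2 * L) := by
        rw [expProfile, mul_rpow hr hL, show 2 * c * (r * L) = -(2 - 2 * c * r) * L + 2 * L by ring,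
          exp_add]
        ring
    _ < K * exp (2 * L) := mul_lt_mul_of_pos_right hKL (exp_pos _)

lemma tendsto_balanceRoot_div (hq : 0 < q) (hc : 0 < c) (hK : 0 < K) :
    Tendsto (fun L => balanceRoot q c K L / L) atTop (𝓝 (1 / c)) := by
  refine tendsto_order.2 ⟨fun a ha => ?_, fun b hb => ?_⟩
  · have hcr : c * max a 0 < 1 := by
      rw [mul_max_of_nonneg _ _ hc.le, mul_zero]
      exact max_lt ((lt_div_iff₀' hc).1 ha) one_pos
    filter_upwards [eventually_mul_lt_balanceRoot hq hc hK (le_max_right a 0) hcr,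
      eventually_gt_atTop 0] with L hL hL0
    exact (le_max_left a 0).trans_lt ((lt_div_iff₀ hL0).2 hL)
  · filter_upwards [eventually_balanceRoot_lt_div hq hc hK, eventually_gt_atTop 0] with L hL hL0
    calc balanceRoot q c K L / L < L / c / L := by gcongr
      _ = 1 / c := by field_simp
      _ < b := hb

end BalanceRoot

lemma balance_of_expProfile_eq {A B c p ε L t : ℝ} (hA : 0 < A) (ht : 0 < t)
    (hεL : ε ^ 2 * exp (2 * L) = 1) (h : expProfile (1 + p) (2 * c) t = B / A * exp (2 * L)) :
    A * ε ^ 2 * t = B * exp (-2 * c * t) * t ^ (-p) := by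
  rw [expProfile, rpow_add ht, rpow_one] at h
  have hbalance : A * ε ^ 2 * (t * t ^ p * exp (2 * c * t)) = B := by
    rw [h, mul_comm (B / A), ← mul_assoc, mul_assoc A, hεL, mul_one, mul_div_cancel₀ B hA.ne']
  rw [← hbalance, rpow_neg ht.le, neg_mul, neg_mul, exp_neg]
  field_simp

lemma sq_mul_exp_two_mul_abs_log {ε : ℝ} (hε₀ : 0 < ε) (hε₁ : ε ≤ 1) :
    ε ^ 2 * exp (2 * |log ε|) = 1 := by
  rw [abs_of_nonpos (log_nonpos hε₀.le hε₁), mul_neg, exp_neg, two_mul, exp_add,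
    exp_log hε₀]
  field_simp

lemma tendsto_abs_log_nhdsGT_zero : Tendsto (fun ε => |log ε|) (𝓝[>] 0) atTop :=
  tendsto_abs_atBot_atTop.comp tendsto_log_nhdsGT_zero

theorem balance_equation_solvable_general
    (N : ℕ)
    (A B ω₀ s : ℝ) (hA : 0 < A) (hB : 0 < B) (hω₀ : 0 < ω₀)
    (hs : 0 < s) :
    ∃ ε₀ : ℝ, 0 < ε₀ ∧ ε₀ < 1 ∧ ∃ d : ℝ → ℝ,
      (∀ ε ∈ Set.Ioo (0 : ℝ) ε₀,
        d ε ∈ Set.Ioo (0 : ℝ) (1 / (Real.sqrt ω₀ * s)) ∧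
        A * ε ^ 2 * d ε * |Real.log ε|
          = B * Real.exp (-2 * Real.sqrt ω₀ * s * d ε * |Real.log ε|)
              * (d ε * |Real.log ε|) ^ (-(((N : ℝ) - 1) / 2))) ∧
      Filter.Tendsto d (nhdsWithin 0 (Set.Ioi 0)) (nhds (1 / (Real.sqrt ω₀ * s))) := by
  set c := √ω₀ * s
  set p := ((N : ℝ) - 1) / 2
  have hc : 0 < c := by positivity
  have hq : 0 < 1 + p := by
    have : (0 : ℝ) ≤ N := N.cast_nonneg
    simp only [p]
    linarith
  have hK : 0 < B / A := div_pos hB hA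
  set τ := balanceRoot (1 + p) c (B / A)
  obtain ⟨L₀, hL₀⟩ := eventually_atTop.1 (eventually_balanceRoot_lt_div hq hc hK)
  set L₁ := max L₀ 1
  have hε₀ : exp (-L₁) < 1 := exp_lt_one_iff.2 (neg_neg_of_pos (lt_max_of_lt_right one_pos))
  refine ⟨exp (-L₁), exp_pos _, hε₀,
    fun ε => τ |log ε| / |log ε|, fun ε hε => ?_,
    (tendsto_balanceRoot_div hq hc hK).comp tendsto_abs_log_nhdsGT_zero⟩
  have hlog : L₁ < |log ε| := by
    have := log_lt_log hε.1 hε.2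
    rw [log_exp] at this
    linarith [neg_le_abs (log ε)]
  have hL : 0 < |log ε| := by linarith [le_max_right L₀ 1]
  have hτ : 0 < τ |log ε| := balanceRoot_pos hq hc hK _
  refine ⟨⟨div_pos hτ hL, (div_lt_iff₀ hL).2 ?_⟩, ?_⟩
  · rw [one_div_mul_eq_div]
    exact hL₀ _ (le_max_left L₀ 1 |>.trans hlog.le)
  · rw [mul_assoc _ (τ _ / _), mul_assoc _ (τ _ / _), div_mul_cancel₀ _ hL.ne',
      mul_assoc (-2) √ω₀ s]
    refine balance_of_expProfile_eq hA hτ (sq_mul_exp_two_mul_abs_log hε.1 ?_) ?_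
    · exact (hε.2.trans hε₀).le
    · exact expProfile_expProfileInv hq (by positivity) (by positivity)

/-- **The balance equation.** For `N ∈ {2,3}`, `A, B, ω₀ > 0` and `s ∈ (0,1]`, for every small
`ε > 0` there is `d_ε ∈ (0, 1/(√ω₀·s))` solving
`A·ε²·d_ε·|log ε| = B·e^{-2√ω₀·s·d_ε·|log ε|}·(d_ε·|log ε|)^{-(N-1)/2}`,
and `d_ε → 1/(√ω₀·s)` as `ε → 0⁺`. -/
theorem balance_equation_solvable
    (N : ℕ) (hN : N = 2 ∨ N = 3)
    (A B ω₀ s : ℝ) (hA : 0 < A) (hB : 0 < B) (hω₀ : 0 < ω₀)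
    (hs : 0 < s) (hs1 : s ≤ 1) :
    ∃ ε₀ : ℝ, 0 < ε₀ ∧ ε₀ < 1 ∧ ∃ d : ℝ → ℝ,
      (∀ ε ∈ Set.Ioo (0 : ℝ) ε₀,
        d ε ∈ Set.Ioo (0 : ℝ) (1 / (Real.sqrt ω₀ * s)) ∧
        A * ε ^ 2 * d ε * |Real.log ε|
          = B * Real.exp (-2 * Real.sqrt ω₀ * s * d ε * |Real.log ε|)
              * (d ε * |Real.log ε|) ^ (-(((N : ℝ) - 1) / 2))) ∧
      Filter.Tendsto d (nhdsWithin 0 (Set.Ioi 0)) (nhds (1 / (Real.sqrt ω₀ * s))) :=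
  balance_equation_solvable_general N A B ω₀ s hA hB hω₀ hs
end
end
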